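/- arXiv:2111.07809 — 4 statements merged into one kernel-verified Lean document; each statement's English description precedes it below -/
import Mathlib

section
/- Let a > 0 and D ≥ 0 be real numbers, and let z be a point of the upper half-plane ℍ with dist_ℍ(z, i·a) ≤ D. Then |exp(i·z)| ≤ exp(−a·e^{−D}). Equivalently, setting β = e^{−a} ∈ (0,1), one has |exp(i·z)| ≤ β^{e^{−D}}. -/
open UpperHalfPlane

theorem Complex.norm_exp_I_mul (z : ℂ) : ‖Complex.exp (Complex.I * z)‖ = Real.exp (-z.im) := by
  simp [Complex.norm_exp]

theorem UpperHalfPlane.im_mul_exp_neg_le_im_of_dist_le {z w : ℍ} {D : ℝ} (h : dist z w ≤ D) :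
    w.im * Real.exp (-D) ≤ z.im :=
  calc w.im * Real.exp (-D) ≤ w.im * Real.exp (-dist z w) := by gcongr
    _ = w.im / Real.exp (dist w z) := by rw [Real.exp_neg, div_eq_mul_inv, dist_comm]
    _ ≤ z.im := im_div_exp_dist_le w z

/-- Upper half-plane form of Lemma 1: if `z ∈ ℍ` is at hyperbolic distance at most `D`
from `i·a`, then `|exp(i·z)| ≤ exp(-a·e^{-D})`; equivalently, with `β = e^{-a}`,
`|exp(i·z)| ≤ β^{e^{-D}}`. -/
theorem abs_exp_le_of_dist_le (a D : ℝ) (ha : 0 < a)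
    (z : UpperHalfPlane)
    (hz : dist z (⟨Complex.I * a, by simpa using ha⟩ : UpperHalfPlane) ≤ D) :
    ‖Complex.exp (Complex.I * z)‖ ≤ Real.exp (-(a * Real.exp (-D))) ∧
    ‖Complex.exp (Complex.I * z)‖ ≤ (Real.exp (-a)) ^ (Real.exp (-D)) := by
  have him : a * Real.exp (-D) ≤ z.im := by
    convert im_mul_exp_neg_le_im_of_dist_le hz
    simp [UpperHalfPlane.im]
  have hexp : ‖Complex.exp (Complex.I * z)‖ ≤ Real.exp (-(a * Real.exp (-D))) := by
    rw [Complex.norm_exp_I_mul]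
    exact Real.exp_le_exp.2 (neg_le_neg him)
  exact ⟨hexp, by rwa [← Real.exp_mul, neg_mul]⟩
end

section
/- Let a > 0. Then every point z of the upper half-plane ℍ with dist_ℍ(z, i·a) < arsinh(π/(2a)) satisfies |Re z| < π/2. Consequently, the map z ↦ exp(i·z) is injective on the open hyperbolic ball {z ∈ ℍ : dist_ℍ(z, i·a) < arsinh(π/(2a))}. -/
open UpperHalfPlane Real

/-! The hyperbolic ball of radius `r` about `w` is the Euclidean disc of radius `w.im * sinh r`
about `w.re + i w.im cosh r`. For `w = i a` and `r = arsinh (π / (2a))` this radius is `π / 2`,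
so real parts in the ball differ by less than `π < 2π`, the period of `z ↦ exp (i z)` along `ℝ`. -/

theorem UpperHalfPlane.abs_re_sub_re_lt_of_dist_lt {z w : ℍ} {r : ℝ} (h : dist z w < r) :
    |z.re - w.re| < w.im * sinh r := by
  rw [dist_lt_iff_dist_coe_center_lt, dist_eq_norm] at h
  calc |z.re - w.re| = |((z : ℂ) - w.center r).re| := by simp
    _ ≤ ‖(z : ℂ) - w.center r‖ := Complex.abs_re_le_norm _
    _ < w.im * sinh r := h

theorem Complex.eq_of_exp_I_mul_eq {z w : ℂ} (hre : |z.re - w.re| < 2 * π)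
    (h : exp (I * z) = exp (I * w)) : z = w := by
  obtain ⟨n, hn⟩ := exp_eq_exp_iff_exists_int.1 h
  have hzw : z = w + n * (2 * π) := mul_left_cancel₀ I_ne_zero (by rw [hn]; ring)
  have hn0 : n = 0 := by
    have hn_mul : |(n : ℝ)| * (2 * π) < 1 * (2 * π) := by
      simpa [hzw, abs_mul, abs_of_pos two_pi_pos] using hre
    have hn_lt : |(n : ℝ)| < 1 := lt_of_mul_lt_mul_right hn_mul two_pi_pos.le
    exact Int.abs_lt_one_iff.1 (by exact_mod_cast hn_lt)
  simp [hzw, hn0]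

/-- The claim in the proof of Lemma 1: every point of the open hyperbolic ball of
center `i·a` and radius `arsinh(π/(2a))` has `|Re z| < π/2`, and consequently
`z ↦ exp(i·z)` is injective on this ball. -/
theorem injOn_exp_ball (a : ℝ) (ha : 0 < a) :
    (∀ z : UpperHalfPlane,
      dist z (⟨Complex.I * a, by simpa using ha⟩ : UpperHalfPlane) <
        Real.arsinh (π / (2 * a)) → |z.re| < π / 2) ∧
    Set.InjOn (fun z : UpperHalfPlane => Complex.exp (Complex.I * z))
      {z : UpperHalfPlane |
        dist z (⟨Complex.I * a, by simpa using ha⟩ : UpperHalfPlane) <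
          Real.arsinh (π / (2 * a))} := by
  set c : ℍ := ⟨Complex.I * a, by simpa using ha⟩
  have abs_re_lt (z : ℍ) (hz : dist z c < arsinh (π / (2 * a))) : |z.re| < π / 2 := by
    have hc : c.re = 0 ∧ c.im = a := by simp [c, UpperHalfPlane.re, UpperHalfPlane.im]
    have hre := abs_re_sub_re_lt_of_dist_lt hz
    rwa [hc.1, hc.2, sub_zero, sinh_arsinh, mul_div_left_comm, div_mul_cancel_right₀ ha.ne',
      ← div_eq_mul_inv] at hre
  refine ⟨abs_re_lt, fun z hz w hw h ↦ UpperHalfPlane.ext (Complex.eq_of_exp_I_mul_eq ?_ h)⟩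
  calc |z.re - w.re| ≤ |z.re| + |w.re| := abs_sub _ _
    _ < π / 2 + π / 2 := add_lt_add (abs_re_lt z hz) (abs_re_lt w hw)
    _ < 2 * π := by linarith [pi_pos]
end

section
/- Let c* ∈ (0,1), let n ≥ 1 be an integer, and define a_i = −1 + i·2^{−n} for 0 ≤ i ≤ 2^n and c_j = c* + (1 − c*)·j·2^{−n} for 0 ≤ j ≤ 2^n. Then for all 1 ≤ i, j ≤ 2^n one has 1 < cr(a_{i−1}, a_i, c_{j−1}, c_j) and log cr(a_{i−1}, a_i, c_{j−1}, c_j) ≤ ((1 − c*)/(c*)²) · 4^{−n}, where cr(a,b,c,d) = ((a−c)(b−d))/((a−d)(b−c)). -/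
/-- The cross-ratio of four real points. -/
noncomputable def cr (a b c d : ℝ) : ℝ := ((a - c) * (b - d)) / ((a - d) * (b - c))

/-- The dyadic partition points of `[-1, 0]`. -/
noncomputable def aseq (n i : ℕ) : ℝ := -1 + (i : ℝ) * ((2 : ℝ) ^ n)⁻¹

/-- The dyadic partition points of `[c*, 1]`. -/
noncomputable def cseq (cs : ℝ) (n j : ℕ) : ℝ := cs + (1 - cs) * (j : ℝ) * ((2 : ℝ) ^ n)⁻¹

/-- The explicit computation in the proof of Lemma 4: each dyadic sub-box of the
normalized box `[-1,0] × [c*,1]` has Liouville measure at most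
`((1-c*)/(c*)²)·4^{-n}`. -/
theorem log_cr_subbox_le (cs : ℝ) (h0 : 0 < cs) (h1 : cs < 1) (n i j : ℕ)
    (hn : 1 ≤ n) (hi1 : 1 ≤ i) (hi2 : i ≤ 2 ^ n) (hj1 : 1 ≤ j) (hj2 : j ≤ 2 ^ n) :
    1 < cr (aseq n (i - 1)) (aseq n i) (cseq cs n (j - 1)) (cseq cs n j) ∧
    Real.log (cr (aseq n (i - 1)) (aseq n i) (cseq cs n (j - 1)) (cseq cs n j)) ≤
      ((1 - cs) / cs ^ 2) * ((4 : ℝ) ^ n)⁻¹ := by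
  have h2n : (0:ℝ) < (2:ℝ) ^ n := by positivity
  set H : ℝ := ((2 : ℝ) ^ n)⁻¹ with hHdef
  have hH : (0:ℝ) < H := by positivity
  have hcast_i : ((i - 1 : ℕ) : ℝ) = (i : ℝ) - 1 := by
    push_cast [Nat.cast_sub hi1]; ring
  have hcast_j : ((j - 1 : ℕ) : ℝ) = (j : ℝ) - 1 := by
    push_cast [Nat.cast_sub hj1]; ring
  set k : ℝ := (1 - cs) * H with hkdef
  have hk : 0 < k := mul_pos (by linarith) hH
  have hb : aseq n i = aseq n (i - 1) + H := by
    simp only [aseq, hcast_i]; ring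
  have hd : cseq cs n j = cseq cs n (j - 1) + k := by
    simp only [cseq, hcast_j, hkdef]; ring
  set a := aseq n (i - 1) with hadef
  set c := cseq cs n (j - 1) with hcdef
  have hiR : (i : ℝ) ≤ (2:ℝ) ^ n := by exact_mod_cast hi2
  have h2H : (2:ℝ) ^ n * H = 1 := mul_inv_cancel₀ (ne_of_gt h2n)
  have ha : a ≤ -H := by
    have : ((i:ℝ) - 1) * H ≤ ((2:ℝ)^n - 1) * H := by
      apply mul_le_mul_of_nonneg_right (by linarith) hH.le
    simp only [hadef, aseq, hcast_i]
    nlinarith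
  have hjR : (1:ℝ) ≤ (j : ℝ) := by exact_mod_cast hj1
  have hc : cs ≤ c := by
    simp only [hcdef, cseq]
    nlinarith
  set u : ℝ := c - a with hudef
  clear_value u a c k H
  have hu1 : cs ≤ u - H := by linarith
  have hu2 : cs ≤ u + k := by linarith
  have hden : (0:ℝ) < (u + k) * (u - H) :=
    mul_pos (lt_of_lt_of_le h0 hu2) (lt_of_lt_of_le h0 hu1)
  have hne1 : a - (c + k) ≠ 0 := by intro h; nlinarith
  have hne2 : a + H - c ≠ 0 := by intro h; nlinarith
  have hne3 : u + k ≠ 0 := (lt_of_lt_of_le h0 hu2).ne'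
  have hne4 : u - H ≠ 0 := (lt_of_lt_of_le h0 hu1).ne'
  have hcr : cr a (a + H) c (c + k) = 1 + k * H / ((u + k) * (u - H)) := by
    unfold cr
    rw [show a - c = -u by rw [hudef]; ring,
        show a + H - (c + k) = -(u + k - H) by rw [hudef]; ring,
        show a - (c + k) = -(u + k) by rw [hudef]; ring,
        show a + H - c = -(u - H) by rw [hudef]; ring]
    rw [neg_mul_neg, neg_mul_neg,
        show u * (u + k - H) = (u + k) * (u - H) + k * H by ring,
        add_div, div_self (ne_of_gt hden)]
  rw [hb, hd, hcr]
  have hpos : 0 < k * H / ((u + k) * (u - H)) := div_pos (mul_pos hk hH) hden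
  constructor
  · linarith
  · have hlog := Real.log_le_sub_one_of_pos (show (0:ℝ) < 1 + k * H / ((u + k) * (u - H)) by linarith)
    have hcs2 : (0:ℝ) < cs ^ 2 := by positivity
    have hle : cs ^ 2 ≤ (u + k) * (u - H) := by nlinarith
    have h24 : ((2:ℝ) ^ n) ^ 2 = (4:ℝ) ^ n := by
      rw [← pow_mul, mul_comm, pow_mul]; norm_num
    have h4 : H ^ 2 = ((4:ℝ) ^ n)⁻¹ := by
      rw [hHdef, ← h24]; exact inv_pow _ _
    have hb1 : k * H / ((u + k) * (u - H)) ≤ k * H / cs ^ 2 :=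
      div_le_div_of_nonneg_left (mul_pos hk hH).le hcs2 hle
    have hb2 : k * H / cs ^ 2 = ((1 - cs) / cs ^ 2) * ((4 : ℝ) ^ n)⁻¹ := by
      rw [hkdef, show (1 - cs) * H * H = (1 - cs) * H ^ 2 by ring, h4]; ring
    linarith only [hlog, hb1, hb2]
end

section
/- There exists a continuous function C : (0,∞) → (0,∞) with the following property: for all real numbers a < b < c < d and every integer n ≥ 1 there exist strictly increasing finite sequences a = a₀ < a₁ < … < a_{2^n} = b and c = c₀ < c₁ < … < c_{2^n} = d such that for all 1 ≤ i, j ≤ 2^n, log cr(a_{i−1}, a_i, c_{j−1}, c_j) ≤ C(log cr(a,b,c,d)) · 4^{−n}, where cr(a,b,c,d) = ((a−c)(b−d))/((a−d)(b−c)). Moreover, the partitions can be chosen nested in n: the partition obtained for n+1 refines the one for n by adding exactly one new point in each interval of the n-th partition. -/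
set_option maxHeartbeats 2000000

noncomputable def phi (a c d s : ℝ) : ℝ := (s*c*(d-a) - d*(c-a)) / (s*(d-a) - (c-a))
noncomputable def psi (a b c u : ℝ) : ℝ := (b*(c-a) - u*a*(c-b)) / ((c-a) - u*(c-b))

section
variable {a b c d : ℝ}

lemma hden (hab : a < b) (hbc : b < c) (hcd : c < d) : (a-d)*(b-c) ≠ 0 := by
  have : (0:ℝ) < (a-d)*(b-c) := by nlinarith
  linarith

lemma cr_gt_one (hab : a < b) (hbc : b < c) (hcd : c < d) : 1 < cr a b c d := by
  rw [cr, lt_div_iff₀ (by nlinarith)]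
  nlinarith

lemma cr_mul (hab : a < b) (hbc : b < c) (hcd : c < d) :
    cr a b c d * ((d-a)*(c-b)) = (c-a)*(d-b) := by
  rw [cr, div_mul_eq_mul_div, div_eq_iff (hden hab hbc hcd)]
  ring

lemma g_pos (hab : a < b) (hbc : b < c) (hcd : c < d) {s : ℝ} (hs : 1 ≤ s) :
    0 < s*(d-a) - (c-a) := by nlinarith

lemma h_pos (hab : a < b) (hbc : b < c) (hcd : c < d) {u : ℝ} (hu1 : 1 ≤ u)
    (hu2 : u ≤ cr a b c d) : 0 < (c-a) - u*(c-b) := by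
  have h2 := cr_mul hab hbc hcd
  nlinarith [mul_le_mul_of_nonneg_right hu2 (by nlinarith : (0:ℝ) ≤ (d-a)*(c-b))]

lemma phi_one (hab : a < b) (hbc : b < c) (hcd : c < d) : phi a c d 1 = a := by
  rw [phi, div_eq_iff (by nlinarith : (1:ℝ)*(d-a) - (c-a) ≠ 0)]
  ring

lemma phi_top (hab : a < b) (hbc : b < c) (hcd : c < d) : phi a c d (cr a b c d) = b := by
  have h1 := hden hab hbc hcd
  have h2 : cr a b c d * (d-a) - (c-a) ≠ 0 :=
    ne_of_gt (g_pos hab hbc hcd (le_of_lt (cr_gt_one hab hbc hcd)))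
  rw [phi, div_eq_iff h2, cr] at *
  have h3 : a - d ≠ 0 := by intro h; linarith
  have h4 : b - c ≠ 0 := by intro h; linarith
  field_simp at h2 ⊢
  ring

lemma psi_one (hab : a < b) (hbc : b < c) (hcd : c < d) : psi a b c 1 = c := by
  rw [psi, div_eq_iff (by nlinarith : (c-a) - 1*(c-b) ≠ 0)]
  ring

lemma psi_top (hab : a < b) (hbc : b < c) (hcd : c < d) : psi a b c (cr a b c d) = d := by
  have h1 := hden hab hbc hcd
  have h2 : (c-a) - cr a b c d * (c-b) ≠ 0 :=
    ne_of_gt (h_pos hab hbc hcd (le_of_lt (cr_gt_one hab hbc hcd)) le_rfl)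
  rw [psi, div_eq_iff h2, cr] at *
  have h3 : a - d ≠ 0 := by intro h; linarith
  have h4 : b - c ≠ 0 := by intro h; linarith
  field_simp at h2 ⊢
  ring

lemma phi_lt (hab : a < b) (hbc : b < c) (hcd : c < d) {s1 s2 : ℝ} (h1 : 1 ≤ s1)
    (h2 : s1 < s2) : phi a c d s1 < phi a c d s2 := by
  rw [phi, phi, div_lt_div_iff₀ (g_pos hab hbc hcd h1) (g_pos hab hbc hcd (by linarith))]
  nlinarith [mul_pos (mul_pos (sub_pos.2 h2) (by linarith : (0:ℝ) < c-a))
    (mul_pos (by linarith : (0:ℝ) < d-a) (by linarith : (0:ℝ) < d-c))]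

lemma psi_lt (hab : a < b) (hbc : b < c) (hcd : c < d) {u1 u2 : ℝ} (h1 : 1 ≤ u1)
    (h2 : u1 < u2) (h3 : u2 ≤ cr a b c d) : psi a b c u1 < psi a b c u2 := by
  rw [psi, psi, div_lt_div_iff₀ (h_pos hab hbc hcd h1 (by linarith)) (h_pos hab hbc hcd (by linarith) h3)]
  nlinarith [mul_pos (mul_pos (sub_pos.2 h2) (by linarith : (0:ℝ) < c-a))
    (mul_pos (by linarith : (0:ℝ) < c-b) (by linarith : (0:ℝ) < b-a))]

lemma phi_sub_psi (hab : a < b) (hbc : b < c) (hcd : c < d) {S u : ℝ}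
    (hg : S*(d-a) - (c-a) ≠ 0) (hh : (c-a) - u*(c-b) ≠ 0) :
    phi a c d S - psi a b c u =
      ((c-a)*(d-a)*(c-b)*(S + u - S*u - cr a b c d)) /
        ((S*(d-a) - (c-a)) * ((c-a) - u*(c-b))) := by
  have h1 := hden hab hbc hcd
  rw [phi, psi, cr, div_sub_div _ _ hg hh, div_eq_div_iff (mul_ne_zero hg hh) (mul_ne_zero hg hh)]
  have h3 : a - d ≠ 0 := by intro h; linarith
  have h4 : b - c ≠ 0 := by intro h; linarith
  field_simp
  ring
end

section
variable {a b c d : ℝ}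


lemma quot_form (K G1 G2 H1 H2 m1 m2 m3 m4 N D : ℝ) (hG1 : G1 ≠ 0) (hG2 : G2 ≠ 0)
    (hH1 : H1 ≠ 0) (hH2 : H2 ≠ 0) (hK : K ≠ 0) (hm3 : m3 ≠ 0) (hm4 : m4 ≠ 0)
    (hD : D ≠ 0) (hnum : m1*m2*D = m3*m4*N) :
    (K*m1/(G1*H1))*(K*m2/(G2*H2)) / ((K*m3/(G1*H2))*(K*m4/(G2*H1))) = N/D := by
  have hGH : G1 * H1 * (G2 * H2) = G1 * H2 * (G2 * H1) := by ring
  rw [div_mul_div_comm, div_mul_div_comm, div_div_div_comm, hGH,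
    div_self (mul_ne_zero (mul_ne_zero hG1 hH2) (mul_ne_zero hG2 hH1)), div_one,
    div_eq_div_iff (mul_ne_zero (mul_ne_zero hK hm3) (mul_ne_zero hK hm4)) hD]
  linear_combination (K*K) * hnum

section
variable {a b c d : ℝ}

/-- Collapse: the cross-ratio of the sub-box depends only on `t, T, U, Λ`. -/
lemma cr_subbox (hab : a < b) (hbc : b < c) (hcd : c < d) {t T U : ℝ}
    (ht : 1 < t) (htT : t ≤ T) (hTΛ : T ≤ cr a b c d) (htU : t ≤ U) (hUΛ : U ≤ cr a b c d) :
    cr (phi a c d (T/t)) (phi a c d T) (psi a b c (U/t)) (psi a b c U) =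
      ((T*U + cr a b c d * t^2 - t*T - t*U) * (T*U + cr a b c d - T - U)) /
        ((T*U + cr a b c d * t - T - U*t) * (T*U + cr a b c d * t - t*T - U)) := by
  have hΛ : 1 < cr a b c d := cr_gt_one hab hbc hcd
  have ht0 : (0:ℝ) < t := by linarith
  have hT1 : 1 ≤ T := by linarith
  have hU1 : 1 ≤ U := by linarith
  have hTt1 : 1 ≤ T/t := (one_le_div ht0).2 htT
  have hUt1 : 1 ≤ U/t := (one_le_div ht0).2 htU
  have hUtΛ : U/t ≤ cr a b c d := by rw [div_le_iff₀ ht0]; nlinarith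
  have hg1 : (T/t)*(d-a) - (c-a) ≠ 0 := ne_of_gt (g_pos hab hbc hcd hTt1)
  have hg2 : T*(d-a) - (c-a) ≠ 0 := ne_of_gt (g_pos hab hbc hcd hT1)
  have hh1 : (c-a) - (U/t)*(c-b) ≠ 0 := ne_of_gt (h_pos hab hbc hcd hUt1 hUtΛ)
  have hh2 : (c-a) - U*(c-b) ≠ 0 := ne_of_gt (h_pos hab hbc hcd hU1 hUΛ)
  have hE1 : 0 < T*U + cr a b c d * t - T - U*t := by nlinarith
  have hE2 : 0 < T*U + cr a b c d * t - t*T - U := by nlinarith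
  have hK : (c-a)*(d-a)*(c-b) ≠ 0 := by
    have h1 : (0:ℝ) < c-a := by linarith
    have h2 : (0:ℝ) < d-a := by linarith
    have h3 : (0:ℝ) < c-b := by linarith
    positivity
  have hm3 : T/t + U - T/t*U - cr a b c d ≠ 0 := by
    have hh : (T/t + U - T/t*U - cr a b c d) * t = -(T*U + cr a b c d*t - T - U*t) := by
      field_simp; ring
    intro h0; rw [h0, zero_mul] at hh; linarith
  have hm4 : T + U/t - T*(U/t) - cr a b c d ≠ 0 := by
    have hh : (T + U/t - T*(U/t) - cr a b c d) * t = -(T*U + cr a b c d*t - t*T - U) := by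
      field_simp; ring
    intro h0; rw [h0, zero_mul] at hh; linarith
  have hnum : (T/t + U/t - T/t*(U/t) - cr a b c d) * (T + U - T*U - cr a b c d) *
        ((T*U + cr a b c d * t - T - U*t) * (T*U + cr a b c d * t - t*T - U)) =
      (T/t + U - T/t*U - cr a b c d) * (T + U/t - T*(U/t) - cr a b c d) *
        ((T*U + cr a b c d * t^2 - t*T - t*U) * (T*U + cr a b c d - T - U)) := by
    field_simp
    ring
  rw [cr, phi_sub_psi hab hbc hcd hg1 hh1, phi_sub_psi hab hbc hcd hg2 hh2,
    phi_sub_psi hab hbc hcd hg1 hh2, phi_sub_psi hab hbc hcd hg2 hh1]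
  exact quot_form _ _ _ _ _ _ _ _ _ _ _ hg1 hg2 hh1 hh2 hK hm3 hm4
    (mul_ne_zero (ne_of_gt hE1) (ne_of_gt hE2)) hnum

/-- The main estimate. -/
lemma main_est (hab : a < b) (hbc : b < c) (hcd : c < d) {t T U : ℝ}
    (ht : 1 < t) (htT : t ≤ T) (hTΛ : T ≤ cr a b c d) (htU : t ≤ U) (hUΛ : U ≤ cr a b c d) :
    Real.log (cr (phi a c d (T/t)) (phi a c d T) (psi a b c (U/t)) (psi a b c U)) ≤
      (cr a b c d)^2 * (t-1)^2 / (cr a b c d - 1) := by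
  have hΛ : 1 < cr a b c d := cr_gt_one hab hbc hcd
  set Λ := cr a b c d with hΛdef
  have hT1 : 1 ≤ T := by linarith
  have hU1 : 1 ≤ U := by linarith
  have hE1 : 0 < T*U + Λ*t - T - U*t := by nlinarith
  have hE2 : 0 < T*U + Λ*t - t*T - U := by nlinarith
  have hEE : 0 < (T*U + Λ*t - T - U*t) * (T*U + Λ*t - t*T - U) := mul_pos hE1 hE2
  have hQ : cr (phi a c d (T/t)) (phi a c d T) (psi a b c (U/t)) (psi a b c U) =
      1 + (Λ-1)*T*U*(t-1)^2 / ((T*U + Λ*t - T - U*t) * (T*U + Λ*t - t*T - U)) := by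
    rw [cr_subbox hab hbc hcd ht htT hTΛ htU hUΛ, ← hΛdef,
      show (1:ℝ) + (Λ-1)*T*U*(t-1)^2 / ((T*U + Λ*t - T - U*t) * (T*U + Λ*t - t*T - U)) =
        ((Λ-1)*T*U*(t-1)^2 + ((T*U + Λ*t - T - U*t) * (T*U + Λ*t - t*T - U))) /
          ((T*U + Λ*t - T - U*t) * (T*U + Λ*t - t*T - U)) by
        rw [add_div, div_self hEE.ne', add_comm],
      div_eq_div_iff hEE.ne' hEE.ne']
    ring
  have hfracpos : 0 ≤ (Λ-1)*T*U*(t-1)^2 / ((T*U + Λ*t - T - U*t) * (T*U + Λ*t - t*T - U)) := by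
    apply div_nonneg _ hEE.le
    have h1 : (0:ℝ) ≤ Λ - 1 := by linarith
    have h2 : (0:ℝ) ≤ T := by linarith
    have h3 : (0:ℝ) ≤ U := by linarith
    positivity
  have hQpos : 0 < cr (phi a c d (T/t)) (phi a c d T) (psi a b c (U/t)) (psi a b c U) := by
    rw [hQ]; linarith
  refine le_trans (Real.log_le_sub_one_of_pos hQpos) ?_
  rw [hQ, add_sub_cancel_left]
  rw [div_le_div_iff₀ hEE (by linarith : (0:ℝ) < Λ - 1)]
  -- (Λ-1)*T*U*(t-1)^2 * (Λ-1) ≤ Λ^2*(t-1)^2 * ((E1)*(E2))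
  have hΛt : (0:ℝ) ≤ Λ*t - T := by nlinarith
  have hΛt' : (0:ℝ) ≤ Λ*t - U := by nlinarith
  have hB1 : T*U*(Λ-1) ≤ Λ*(T*U + Λ*t - T - U*t) := by
    nlinarith [mul_nonneg (by linarith : (0:ℝ) ≤ Λ - U) hΛt]
  have hB2 : T*U*(Λ-1) ≤ Λ*(T*U + Λ*t - t*T - U) := by
    nlinarith [mul_nonneg (by linarith : (0:ℝ) ≤ Λ - T) hΛt']
  have hP : (0:ℝ) ≤ T*U*(Λ-1) := by
    have := mul_nonneg (mul_nonneg (by linarith : (0:ℝ) ≤ T) (by linarith : (0:ℝ) ≤ U))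
      (by linarith : (0:ℝ) ≤ Λ - 1)
    linarith
  have hprod : (T*U*(Λ-1))*(T*U*(Λ-1)) ≤ (Λ*(T*U + Λ*t - T - U*t))*(Λ*(T*U + Λ*t - t*T - U)) :=
    mul_le_mul hB1 hB2 hP (by nlinarith [mul_pos (by nlinarith : (0:ℝ) < Λ) hE1])
  have hTU1 : 1 ≤ T*U := by nlinarith [mul_le_mul hT1 hU1 (by linarith : (0:ℝ) ≤ 1) (by linarith : (0:ℝ) ≤ T)]
  have hTU0 : (0:ℝ) ≤ T*U := by nlinarith
  have h3a : T*U*(Λ-1)^2 ≤ (T*U*(Λ-1))*(T*U*(Λ-1)) := by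
    nlinarith [mul_nonneg (mul_nonneg (sq_nonneg (Λ-1)) hTU0) (by linarith : (0:ℝ) ≤ T*U - 1)]
  have h3 : T*U*(Λ-1)^2 ≤ Λ^2*((T*U + Λ*t - T - U*t) * (T*U + Λ*t - t*T - U)) := by
    calc T*U*(Λ-1)^2 ≤ (Λ*(T*U + Λ*t - T - U*t))*(Λ*(T*U + Λ*t - t*T - U)) := le_trans h3a hprod
      _ = Λ^2*((T*U + Λ*t - T - U*t) * (T*U + Λ*t - t*T - U)) := by ring
  calc (Λ-1)*T*U*(t-1)^2 * (Λ-1) = (t-1)^2 * (T*U*(Λ-1)^2) := by ring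
    _ ≤ (t-1)^2 * (Λ^2*((T*U + Λ*t - T - U*t) * (T*U + Λ*t - t*T - U))) :=
        mul_le_mul_of_nonneg_left h3 (sq_nonneg _)
    _ = Λ^2*(t-1)^2 * ((T*U + Λ*t - T - U*t) * (T*U + Λ*t - t*T - U)) := by ring
end

noncomputable def Cfun : ℝ → ℝ := fun x => x^2 * Real.exp (3*x) / (Real.exp x - 1)

lemma Cfun_cont : ContinuousOn Cfun (Set.Ioi (0 : ℝ)) := by
  apply ContinuousOn.div
  · fun_prop
  · fun_prop
  · intro x hx
    have hx0 : (0:ℝ) < x := hx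
    have := Real.add_one_le_exp x
    have : 1 < Real.exp x := by linarith
    linarith

lemma Cfun_pos : ∀ x > (0:ℝ), 0 < Cfun x := by
  intro x hx
  have := Real.add_one_le_exp x
  have h1 : 1 < Real.exp x := by linarith
  have h2 : 0 < Real.exp (3*x) := Real.exp_pos _
  apply div_pos (by positivity) (by linarith)

/-- Lemma 4 of the paper (box-partition lemma), for boxes with real endpoints
`a < b < c < d`: there is a continuous positive function `C` on `(0,∞)` such that
every box `[a,b] × [c,d]` admits, for each `n ≥ 1`, partitions of `[a,b]` and `[c,d]`
into `2^n` subintervals each of whose `4^n` sub-boxes has Liouville measure at most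
`C(log cr(a,b,c,d))·4^{-n}`; moreover the partitions are nested, the `(n+1)`-st
refining the `n`-th by adding exactly one point inside each interval. -/
theorem exists_nested_partitions :
    ∃ C : ℝ → ℝ, ContinuousOn C (Set.Ioi (0 : ℝ)) ∧ (∀ x > 0, 0 < C x) ∧
      ∀ a b c d : ℝ, a < b → b < c → c < d →
        ∃ A B : ℕ → ℕ → ℝ,
          (∀ n : ℕ, A n 0 = a ∧ A n (2 ^ n) = b ∧ B n 0 = c ∧ B n (2 ^ n) = d) ∧
          (∀ n : ℕ, StrictMonoOn (A n) (Set.Iic (2 ^ n)) ∧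
            StrictMonoOn (B n) (Set.Iic (2 ^ n))) ∧
          (∀ n i : ℕ, i ≤ 2 ^ n → A (n + 1) (2 * i) = A n i ∧ B (n + 1) (2 * i) = B n i) ∧
          ∀ n : ℕ, 1 ≤ n → ∀ i j : ℕ, 1 ≤ i → i ≤ 2 ^ n → 1 ≤ j → j ≤ 2 ^ n →
            Real.log (cr (A n (i - 1)) (A n i) (B n (j - 1)) (B n j)) ≤
              C (Real.log (cr a b c d)) * ((4 : ℝ) ^ n)⁻¹ := by
  refine ⟨Cfun, Cfun_cont, Cfun_pos, ?_⟩
  intro a b c d hab hbc hcd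
  have hΛ : 1 < cr a b c d := cr_gt_one hab hbc hcd
  have hΛ0 : 0 < cr a b c d := by linarith
  have hL : 0 < Real.log (cr a b c d) := Real.log_pos hΛ
  set Λ := cr a b c d with hΛdef
  set L := Real.log Λ with hLdef
  refine ⟨fun n i => phi a c d (Real.exp ((i:ℝ) * L / 2^n)),
          fun n j => psi a b c (Real.exp ((j:ℝ) * L / 2^n)), ?_, ?_, ?_, ?_⟩
  · intro n
    have h2n : ((2:ℝ))^n ≠ 0 := by positivity
    have hend : Real.exp (((2^n : ℕ):ℝ) * L / 2^n) = Λ := by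
      rw [show ((2^n : ℕ):ℝ) * L / 2^n = L by push_cast; field_simp, Real.exp_log hΛ0]
    refine ⟨?_, ?_, ?_, ?_⟩
    · simp only [Nat.cast_zero, zero_mul, zero_div, Real.exp_zero]
      exact phi_one hab hbc hcd
    · show phi a c d (Real.exp (((2^n : ℕ):ℝ) * L / 2^n)) = b
      rw [hend]; exact phi_top hab hbc hcd
    · simp only [Nat.cast_zero, zero_mul, zero_div, Real.exp_zero]
      exact psi_one hab hbc hcd
    · show psi a b c (Real.exp (((2^n : ℕ):ℝ) * L / 2^n)) = d
      rw [hend]; exact psi_top hab hbc hcd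
  · intro n
    have h2n : (0:ℝ) < 2^n := by positivity
    constructor
    · intro i hi j hj hij
      apply phi_lt hab hbc hcd
      · exact Real.one_le_exp (by positivity)
      · apply Real.exp_lt_exp.2
        have : (i:ℝ) < j := by exact_mod_cast hij
        gcongr
    · intro i hi j hj hij
      apply psi_lt hab hbc hcd
      · exact Real.one_le_exp (by positivity)
      · apply Real.exp_lt_exp.2
        have : (i:ℝ) < j := by exact_mod_cast hij
        gcongr
      · have hj' : (j:ℝ) ≤ 2^n := by exact_mod_cast hj
        have : (j:ℝ) * L / 2^n ≤ L := by
          rw [div_le_iff₀ h2n]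
          nlinarith
        calc Real.exp ((j:ℝ) * L / 2^n) ≤ Real.exp L := Real.exp_le_exp.2 this
          _ = Λ := Real.exp_log hΛ0
  · intro n i hi
    constructor
    · show phi a c d (Real.exp (((2*i : ℕ):ℝ) * L / 2^(n+1))) =
        phi a c d (Real.exp ((i:ℝ) * L / 2^n))
      congr 1
      congr 1
      push_cast
      ring
    · show psi a b c (Real.exp (((2*i : ℕ):ℝ) * L / 2^(n+1))) =
        psi a b c (Real.exp ((i:ℝ) * L / 2^n))
      congr 1
      congr 1
      push_cast
      ring
  · intro n hn i j hi1 hi2 hj1 hj2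
    show Real.log (cr (phi a c d (Real.exp (((i-1 : ℕ):ℝ) * L / 2^n)))
        (phi a c d (Real.exp ((i:ℝ) * L / 2^n)))
        (psi a b c (Real.exp (((j-1 : ℕ):ℝ) * L / 2^n)))
        (psi a b c (Real.exp ((j:ℝ) * L / 2^n)))) ≤ Cfun L * ((4:ℝ)^n)⁻¹
    have h2n : (0:ℝ) < 2^n := by positivity
    have he : 0 < L / 2^n := by positivity
    have hA1 : Real.exp (((i-1 : ℕ):ℝ) * L / 2^n) =
        Real.exp ((i:ℝ) * L / 2^n) / Real.exp (L / 2^n) := by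
      rw [← Real.exp_sub]
      congr 1
      rw [Nat.cast_sub hi1, Nat.cast_one]
      ring
    have hB1 : Real.exp (((j-1 : ℕ):ℝ) * L / 2^n) =
        Real.exp ((j:ℝ) * L / 2^n) / Real.exp (L / 2^n) := by
      rw [← Real.exp_sub]
      congr 1
      rw [Nat.cast_sub hj1, Nat.cast_one]
      ring
    rw [hA1, hB1]
    have ht : 1 < Real.exp (L / 2^n) := by
      rw [← Real.exp_zero]
      exact Real.exp_lt_exp.2 he
    have hiR : (1:ℝ) ≤ (i:ℝ) := by exact_mod_cast hi1
    have hjR : (1:ℝ) ≤ (j:ℝ) := by exact_mod_cast hj1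
    have hi2R : (i:ℝ) ≤ 2^n := by exact_mod_cast hi2
    have hj2R : (j:ℝ) ≤ 2^n := by exact_mod_cast hj2
    have htT : Real.exp (L / 2^n) ≤ Real.exp ((i:ℝ) * L / 2^n) := by
      apply Real.exp_le_exp.2
      rw [div_le_div_iff₀ h2n h2n]
      nlinarith [mul_le_mul_of_nonneg_right (mul_le_mul_of_nonneg_right hiR hL.le) h2n.le]
    have hTΛ : Real.exp ((i:ℝ) * L / 2^n) ≤ Λ := by
      rw [← Real.exp_log hΛ0]
      apply Real.exp_le_exp.2
      rw [div_le_iff₀ h2n]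
      nlinarith [mul_le_mul_of_nonneg_right hi2R hL.le]
    have htU : Real.exp (L / 2^n) ≤ Real.exp ((j:ℝ) * L / 2^n) := by
      apply Real.exp_le_exp.2
      rw [div_le_div_iff₀ h2n h2n]
      nlinarith [mul_le_mul_of_nonneg_right (mul_le_mul_of_nonneg_right hjR hL.le) h2n.le]
    have hUΛ : Real.exp ((j:ℝ) * L / 2^n) ≤ Λ := by
      rw [← Real.exp_log hΛ0]
      apply Real.exp_le_exp.2
      rw [div_le_iff₀ h2n]
      nlinarith [mul_le_mul_of_nonneg_right hj2R hL.le]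
    refine le_trans (main_est hab hbc hcd ht htT hTΛ htU hUΛ) ?_
    -- now: Λ^2 * (t-1)^2 / (Λ-1) ≤ Cfun L * ((4:ℝ)^n)⁻¹
    set t := Real.exp (L / 2^n) with htdef
    have ht0 : 0 < t := Real.exp_pos _
    -- t - 1 ≤ (L/2^n) * t
    have hsub : t - 1 ≤ (L / 2^n) * t := by
      have h1 : 1 - L/2^n ≤ Real.exp (-(L/2^n)) := by
        have := Real.add_one_le_exp (-(L/2^n))
        linarith
      have h2 : Real.exp (-(L/2^n)) = t⁻¹ := by rw [htdef, ← Real.exp_neg]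
      rw [h2] at h1
      have h3 : (1 - L/2^n) * t ≤ t⁻¹ * t := mul_le_mul_of_nonneg_right h1 ht0.le
      rw [inv_mul_cancel₀ ht0.ne'] at h3
      nlinarith
    -- t ≤ exp (L/2), and exp(L/2)^2 = Λ
    have h2nn : (2:ℝ) ≤ 2^n := by
      calc (2:ℝ) = 2^1 := by norm_num
        _ ≤ 2^n := by
          apply pow_le_pow_right₀ (by norm_num) hn
    have htle : t ≤ Real.exp (L/2) := by
      apply Real.exp_le_exp.2
      apply div_le_div_of_nonneg_left hL.le (by norm_num) h2nn
    have hexpsq : Real.exp (L/2) * Real.exp (L/2) = Λ := by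
      rw [← Real.exp_add]
      rw [show L/2 + L/2 = L by ring]
      exact Real.exp_log hΛ0
    have hsq : (t-1)^2 ≤ L^2 * Λ * ((4:ℝ)^n)⁻¹ := by
      have h4 : ((2:ℝ)^n)^2 = 4^n := by
        rw [← pow_mul, mul_comm, pow_mul]; norm_num
      have ht1 : (0:ℝ) ≤ t - 1 := by linarith
      have hs1 : (t-1)^2 ≤ ((L / 2^n) * t)^2 := by
        apply sq_le_sq' (by nlinarith) hsub
      have ht2 : t * t ≤ Λ := by
        calc t * t ≤ Real.exp (L/2) * Real.exp (L/2) :=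
              mul_le_mul htle htle ht0.le (Real.exp_pos _).le
          _ = Λ := hexpsq
      calc (t-1)^2 ≤ ((L / 2^n) * t)^2 := hs1
        _ = (L^2 / ((2^n)^2)) * (t*t) := by ring
        _ ≤ (L^2 / ((2^n)^2)) * Λ := by
            apply mul_le_mul_of_nonneg_left ht2 (by positivity)
        _ = L^2 * Λ * ((4:ℝ)^n)⁻¹ := by rw [h4]; ring
    have hC : Cfun L = L^2 * Λ^3 / (Λ - 1) := by
      rw [Cfun, show (3:ℝ)*L = L+(L+L) by ring, Real.exp_add, Real.exp_add, Real.exp_log hΛ0]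
      ring
    rw [hC]
    calc Λ^2 * (t-1)^2 / (Λ-1) ≤ Λ^2 * (L^2 * Λ * ((4:ℝ)^n)⁻¹) / (Λ-1) := by
          gcongr
      _ = (L^2 * Λ^3 / (Λ-1)) * ((4:ℝ)^n)⁻¹ := by ring
end
end
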